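/- Let n ≥ 4 and 1 ≤ l ≤ n/2 − 1, let u₀ ∈ L^{1,1}(ℝⁿ) ∩ Y^{l+1} and u₁ ∈ L^{1,1}(ℝⁿ) ∩ Y^{l}, and let v be a Fourier-space solution of the plate equation with data (u₀, u₁). Then there exist constants C > 0 and T ≥ 1, with C depending only on n, such that for all t ≥ T: (∫_{ℝⁿ} |v(t,ξ)|² dξ)^{1/2} ≤ C·I_{0,l}·t^{-(l+1)/2}. -/

import Mathlib

open MeasureTheory Real

noncomputable section

def mlog {n : ℕ} (ξ : EuclideanSpace ℝ (Fin n)) : ℝ := Real.log (1 + ‖ξ‖ ^ 2)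

def rho {n : ℕ} (ξ : EuclideanSpace ℝ (Fin n)) : ℝ :=
  min (min ((1/2) * mlog ξ * (1 + mlog ξ)) (1 / (2 * (1 + mlog ξ))))
    ((1/2) * Real.sqrt (mlog ξ))

def ft {n : ℕ} (f : EuclideanSpace ℝ (Fin n) → ℂ) (ξ : EuclideanSpace ℝ (Fin n)) : ℂ :=
  ∫ x, Complex.exp (-Complex.I * ((inner ℝ x ξ : ℝ) : ℂ)) * f x

def normL1 {n : ℕ} (f : EuclideanSpace ℝ (Fin n) → ℂ) : ℝ := ∫ x, ‖f x‖

def norm11 {n : ℕ} (f : EuclideanSpace ℝ (Fin n) → ℂ) : ℝ :=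
  ∫ x, (1 + ‖x‖) * ‖f x‖

def MemL11 {n : ℕ} (f : EuclideanSpace ℝ (Fin n) → ℂ) : Prop :=
  Integrable f ∧ Integrable (fun x => (1 + ‖x‖) * ‖f x‖)

def Ysq {n : ℕ} (f : EuclideanSpace ℝ (Fin n) → ℂ) (δ : ℝ) : ℝ :=
  ∫ ξ, (1 + mlog ξ) ^ δ * ‖ft f ξ‖ ^ 2

def MemY {n : ℕ} (f : EuclideanSpace ℝ (Fin n) → ℂ) (δ : ℝ) : Prop :=
  Integrable (fun ξ => (1 + mlog ξ) ^ δ * ‖ft f ξ‖ ^ 2)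

def IsFourierSol {n : ℕ} (u₀ u₁ : EuclideanSpace ℝ (Fin n) → ℂ)
    (v : ℝ → EuclideanSpace ℝ (Fin n) → ℂ) : Prop :=
  Measurable (Function.uncurry v) ∧
  ∀ ξ, ContDiff ℝ 2 (fun t => v t ξ) ∧
    (∀ t > (0:ℝ), ((1 + mlog ξ : ℝ) : ℂ) * deriv (deriv (fun s => v s ξ)) t
        + ((mlog ξ * (1 + mlog ξ) : ℝ) : ℂ) * v t ξ + deriv (fun s => v s ξ) t = 0) ∧
    v 0 ξ = ft u₀ ξ ∧ deriv (fun s => v s ξ) 0 = ft u₁ ξ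

def PP {n : ℕ} (u₀ u₁ : EuclideanSpace ℝ (Fin n) → ℂ) : ℂ := (∫ x, u₀ x) + ∫ x, u₁ x

def prof1 {n : ℕ} (u₀ u₁ : EuclideanSpace ℝ (Fin n) → ℂ) (t : ℝ)
    (ξ : EuclideanSpace ℝ (Fin n)) : ℂ :=
  PP u₀ u₁ * ((Real.exp (-(t * (mlog ξ * (1 + mlog ξ)))) : ℝ) : ℂ)

def prof2 {n : ℕ} (u₀ u₁ : EuclideanSpace ℝ (Fin n) → ℂ) (t : ℝ)
    (ξ : EuclideanSpace ℝ (Fin n)) : ℂ :=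
  ((Real.exp (-(t / (2 * mlog ξ))) : ℝ) : ℂ) *
    (((Real.sin (Real.sqrt (mlog ξ) * t) / Real.sqrt (mlog ξ) : ℝ) : ℂ) * ft u₁ ξ
      + ((Real.cos (Real.sqrt (mlog ξ) * t) : ℝ) : ℂ) * ft u₀ ξ)

def I0 {n : ℕ} (u₀ u₁ : EuclideanSpace ℝ (Fin n) → ℂ) (l : ℝ) : ℝ :=
  Real.sqrt (norm11 u₀ ^ 2 + norm11 u₁ ^ 2 + Ysq u₀ (l + 1) + Ysq u₁ l)

/-!
Each Fourier mode solves the damped oscillator `(1 + M) x'' + x' + M (1 + M) x = 0` with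
`M = log (1 + |ξ|²)`. At high frequencies (`M > 1/10`) a perturbed energy
`(1 + M) x'² + M (1 + M) x² + m x x'` decays like `exp (-t / (30 (1 + M)))`, and
`exp (-X) ≤ k ^ k X ^ (-k)` trades this decay for `t ^ (-(l+1))` at the price of the weight
`(1 + M) ^ (l+1)`, which the `Y^δ` norms of the data pay for. At low frequencies the
oscillator is overdamped: its slow characteristic root is at most `-M ≤ -|ξ|²/2`, so the mode
is bounded by a Gaussian `exp (-t |ξ|²)` times the `L^{1,1}` norms of the data, and integrating the
Gaussian gives `t ^ (-n/2) ≤ t ^ (-(l+1))`.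
-/

lemma deriv_sub_mul_eq_mul_exp {x : ℝ → ℝ} {p q : ℝ} (hx : ContDiff ℝ 2 x)
    (hode : ∀ t > 0, deriv (deriv x) t - (p + q) * deriv x t + p * q * x t = 0)
    {t : ℝ} (ht : 0 ≤ t) :
    deriv x t - q * x t = (deriv x 0 - q * x 0) * exp (p * t) := by
  have hx1 : Differentiable ℝ x := hx.differentiable (by norm_num)
  have hx2 : Differentiable ℝ (deriv x) := hx.differentiable_deriv_two
  set y : ℝ → ℝ := fun s => exp (-(p * s)) * (deriv x s - q * x s) with hy
  have hy' : ∀ s, HasDerivAt y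
      (exp (-(p * s)) * (deriv (deriv x) s - (p + q) * deriv x s + p * q * x s)) s := by
    intro s
    have he : HasDerivAt (fun s => exp (-(p * s))) (exp (-(p * s)) * -p) s := by
      simpa using ((hasDerivAt_id s).const_mul p).neg.exp
    refine (he.mul ((hx2 s).hasDerivAt.sub ((hx1 s).hasDerivAt.const_mul q))).congr_deriv ?_
    simp only [Pi.sub_apply]
    ring
  have hconst : y t = y 0 := by
    rcases ht.eq_or_lt with rfl | ht
    · rfl
    obtain ⟨c, hc, hslope⟩ := exists_hasDerivAt_eq_slope y _ ht
      (fun s _ => (hy' s).continuousAt.continuousWithinAt) (fun s _ => hy' s)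
    rw [hode c hc.1, mul_zero, eq_comm, div_eq_zero_iff, sub_eq_zero] at hslope
    exact hslope.resolve_right (by linarith)
  simp only [hy, mul_zero, neg_zero, exp_zero, one_mul] at hconst
  rw [← hconst, mul_right_comm, ← exp_add]
  simp

lemma sub_mul_eq_of_char_roots {x : ℝ → ℝ} {p q : ℝ} (hx : ContDiff ℝ 2 x)
    (hode : ∀ t > 0, deriv (deriv x) t - (p + q) * deriv x t + p * q * x t = 0)
    {t : ℝ} (ht : 0 ≤ t) :
    (p - q) * x t
      = (deriv x 0 - q * x 0) * exp (p * t) - (deriv x 0 - p * x 0) * exp (q * t) := by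
  have hp := deriv_sub_mul_eq_mul_exp hx hode ht
  have hq := deriv_sub_mul_eq_mul_exp (p := q) (q := p) hx
    (fun t ht => by linarith [hode t ht]) ht
  linarith

lemma sq_mul_sq_le_of_char_roots {x : ℝ → ℝ} {p q : ℝ} (hx : ContDiff ℝ 2 x)
    (hode : ∀ t > 0, deriv (deriv x) t - (p + q) * deriv x t + p * q * x t = 0)
    (hqp : q ≤ p) (hp : p ^ 2 ≤ 1) (hq : q ^ 2 ≤ 1) {t : ℝ} (ht : 0 ≤ t) :
    (p - q) ^ 2 * x t ^ 2 ≤ 8 * (x 0 ^ 2 + deriv x 0 ^ 2) * exp (2 * p * t) := by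
  set P := x 0
  set Q := deriv x 0
  have hE : exp (q * t) ≤ exp (p * t) := exp_le_exp.2 (mul_le_mul_of_nonneg_right hqp ht)
  have hsq : exp (2 * p * t) = exp (p * t) ^ 2 := by rw [← exp_nat_mul]; ring_nf
  have hA : (Q - q * P) ^ 2 ≤ 2 * (P ^ 2 + Q ^ 2) := by
    nlinarith [sq_nonneg (Q + q * P), mul_nonneg (sub_nonneg.2 hq) (sq_nonneg P)]
  have hB : (Q - p * P) ^ 2 ≤ 2 * (P ^ 2 + Q ^ 2) := by
    nlinarith [sq_nonneg (Q + p * P), mul_nonneg (sub_nonneg.2 hp) (sq_nonneg P)]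
  rw [← mul_pow, sub_mul_eq_of_char_roots hx hode ht, hsq]
  have := exp_pos (q * t)
  nlinarith [sq_nonneg ((Q - q * P) * exp (p * t) + (Q - p * P) * exp (q * t)),
    mul_le_mul_of_nonneg_right hA (sq_nonneg (exp (p * t))),
    mul_le_mul_of_nonneg_right hB (sq_nonneg (exp (p * t))),
    mul_le_mul_of_nonneg_left (pow_le_pow_left₀ this.le hE 2) (sq_nonneg (Q - p * P))]

lemma exp_neg_le_rpow_mul_rpow_neg {k X : ℝ} (hk : 0 < k) (hX : 0 < X) :
    exp (-X) ≤ k ^ k * X ^ (-k) := by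
  have h : X ^ k ≤ k ^ k * exp X := by
    calc X ^ k = k ^ k * (X / k) ^ k := by
          rw [← mul_rpow hk.le (by positivity), mul_div_cancel₀ _ hk.ne']
      _ ≤ k ^ k * exp (X / k) ^ k := by
          gcongr
          linarith [add_one_le_exp (X / k)]
      _ = k ^ k * exp X := by rw [← exp_mul, div_mul_cancel₀ _ hk.ne']
  rw [exp_neg, rpow_neg hX.le, ← div_eq_mul_inv, le_div_iff₀ (rpow_pos_of_pos hX k),
    inv_mul_eq_div, div_le_iff₀ (exp_pos X)]
  linarith

section PlateEnergy

variable {M m : ℝ}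

/-- The cross term `m P Q` makes the energy decay at a positive rate rather than merely
decrease. -/
def plateEnergy (M m P Q : ℝ) : ℝ := (1 + M) * Q ^ 2 + M * (1 + M) * P ^ 2 + m * (P * Q)

lemma sq_le_plateEnergy (hM : 0 < M) (hm0 : 0 ≤ m) (hm1 : m ≤ 1) (hmM : m ≤ M)
    (P Q : ℝ) : M * (1 + M) * P ^ 2 ≤ 2 * plateEnergy M m P Q := by
  unfold plateEnergy
  nlinarith [sq_nonneg (Q + m * P), mul_nonneg (sub_nonneg.2 hmM) (sq_nonneg P),
    mul_nonneg hM.le (sq_nonneg Q), mul_nonneg hm0 (sub_nonneg.2 hm1),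
    mul_nonneg (mul_nonneg hm0 hM.le) (sq_nonneg P)]

lemma plateEnergy_le (hM : 0 < M) (hm0 : 0 ≤ m) (hm1 : m ≤ 1) (hmM : m ≤ M)
    (P Q : ℝ) :
    2 * plateEnergy M m P Q ≤ 3 * ((1 + M) * Q ^ 2 + M * (1 + M) * P ^ 2) := by
  unfold plateEnergy
  nlinarith [sq_nonneg (Q - m * P), mul_nonneg (sub_nonneg.2 hmM) (sq_nonneg P),
    mul_nonneg hM.le (sq_nonneg Q), mul_nonneg hm0 (sub_nonneg.2 hm1),
    mul_nonneg (mul_nonneg hm0 hM.le) (sq_nonneg P)]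

/-- Along a solution, `P = x`, `Q = x'`, `R = x''`, and the second summand is the time
derivative of the energy. -/
lemma plateEnergy_dissipation (hM : 0 < M) (hm0 : 0 ≤ m) (hm1 : m ≤ 1) (hmM : m ≤ M)
    {P Q R : ℝ} (hR : (1 + M) * R + M * (1 + M) * P + Q = 0) :
    m / (3 * (1 + M)) * plateEnergy M m P Q
      + (2 * (1 + M) * Q * R + 2 * M * (1 + M) * P * Q + m * (Q ^ 2 + P * R)) ≤ 0 := by
  have h1M : 0 < 1 + M := by linarith
  obtain rfl : R = -(M * P) - Q / (1 + M) := by field_simp; linarith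
  have key : 0 ≤ (2 - 4 * m / 3) * (1 + M) * Q ^ 2 + 2 / 3 * m * M * (1 + M) * P ^ 2
      + m * (1 - m / 3) * (P * Q) := by
    nlinarith [sq_nonneg (Q + m * P), sq_nonneg (Q - m * P), mul_nonneg hm0 hM.le,
      mul_nonneg (mul_nonneg hm0 hM.le) (sq_nonneg P),
      mul_nonneg (sub_nonneg.2 hmM) (sq_nonneg P), mul_nonneg hM.le (sq_nonneg Q)]
  have : m / (3 * (1 + M)) * plateEnergy M m P Q
      + (2 * (1 + M) * Q * (-(M * P) - Q / (1 + M)) + 2 * M * (1 + M) * P * Q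
        + m * (Q ^ 2 + P * (-(M * P) - Q / (1 + M))))
      = -((2 - 4 * m / 3) * (1 + M) * Q ^ 2 + 2 / 3 * m * M * (1 + M) * P ^ 2
        + m * (1 - m / 3) * (P * Q)) / (1 + M) := by
    unfold plateEnergy
    field_simp
    ring
  rw [this]
  exact div_nonpos_of_nonpos_of_nonneg (by linarith) h1M.le

end PlateEnergy

section PlateMode

variable {E F : Type*} [NormedAddCommGroup E] [NormedSpace ℝ E]
  [NormedAddCommGroup F] [NormedSpace ℝ F] {M : ℝ}

def IsPlateMode (M : ℝ) (x : ℝ → E) : Prop :=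
  ContDiff ℝ 2 x ∧ ∀ t > 0, (1 + M) • deriv (deriv x) t + (M * (1 + M)) • x t + deriv x t = 0

lemma ContinuousLinearMap.deriv_comp_eq (P : E →L[ℝ] F) {x : ℝ → E}
    (hx : Differentiable ℝ x) : deriv (P ∘ x) = P ∘ deriv x :=
  funext fun t => (P.hasFDerivAt.comp_hasDerivAt t (hx t).hasDerivAt).deriv

lemma IsPlateMode.clm_comp {x : ℝ → E} (hx : IsPlateMode M x) (P : E →L[ℝ] F) :
    IsPlateMode M (P ∘ x) := by
  refine ⟨P.contDiff.comp hx.1, fun t ht => ?_⟩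
  rw [P.deriv_comp_eq (hx.1.differentiable (by norm_num)),
    P.deriv_comp_eq hx.1.differentiable_deriv_two]
  simpa using congrArg P (hx.2 t ht)

namespace IsPlateMode

variable {x : ℝ → ℝ}

lemma sq_le_of_le_one_tenth (hx : IsPlateMode M x) (hM0 : 0 ≤ M) (hM : M ≤ 1 / 10)
    {t : ℝ} (ht : 0 ≤ t) :
    x t ^ 2 ≤ 21 * (x 0 ^ 2 + deriv x 0 ^ 2) * exp (-(2 * M) * t) := by
  have h1M : 0 < 1 + M := by linarith
  set d := √(1 - 4 * M * (1 + M) ^ 2)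
  have hd2 : d ^ 2 = 1 - 4 * M * (1 + M) ^ 2 := sq_sqrt (by nlinarith)
  have hd0 : 0 ≤ d := sqrt_nonneg _
  have hd7 : 7 / 10 ≤ d := by nlinarith
  have hd1 : d ≤ 1 := by nlinarith
  -- the characteristic roots `(-1 ± d) / (2 (1 + M))`
  set p := (-1 + d) / (2 * (1 + M)) with hp
  set q := (-1 - d) / (2 * (1 + M)) with hq
  have hode : ∀ t > 0, deriv (deriv x) t - (p + q) * deriv x t + p * q * x t = 0 := by
    intro t ht
    have h := hx.2 t ht
    simp only [smul_eq_mul] at h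
    have hsum : p + q = -1 / (1 + M) := by rw [hp, hq]; field_simp; ring
    have hprod : p * q = M := by rw [hp, hq]; field_simp; nlinarith
    rw [hsum, hprod]
    field_simp
    linarith
  have hpq : p - q = d / (1 + M) := by rw [hp, hq]; field_simp; ring
  have hpM : p ≤ -M := by
    rw [hp, div_le_iff₀ (by positivity)]
    nlinarith
  have hbound := sq_mul_sq_le_of_char_roots hx.1 hode (by rw [← sub_nonneg, hpq]; positivity)
    (by rw [hp, div_pow, div_le_one (by positivity)]; nlinarith)
    (by rw [hq, div_pow, div_le_one (by positivity)]; nlinarith) ht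
  have hgap : 49 / 121 ≤ (p - q) ^ 2 := by
    rw [hpq, div_pow, le_div_iff₀ (by positivity)]
    nlinarith
  have hexp : exp (2 * p * t) ≤ exp (-(2 * M) * t) := exp_le_exp.2 (by nlinarith)
  have hx2 : 0 ≤ x t ^ 2 := sq_nonneg _
  have hdata : 0 ≤ x 0 ^ 2 + deriv x 0 ^ 2 := by positivity
  nlinarith [mul_le_mul_of_nonneg_left hexp hdata, mul_le_mul_of_nonneg_right hgap hx2]

lemma sq_le_exp_mul {m : ℝ} (hx : IsPlateMode M x) (hM : 0 < M) (hm0 : 0 ≤ m) (hm1 : m ≤ 1)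
    (hmM : m ≤ M) {t : ℝ} (ht : 0 ≤ t) :
    x t ^ 2 ≤ 3 * exp (-(m / (3 * (1 + M)) * t)) * (deriv x 0 ^ 2 / M + x 0 ^ 2) := by
  have hx1 : Differentiable ℝ x := hx.1.differentiable (by norm_num)
  have hx2 : Differentiable ℝ (deriv x) := hx.1.differentiable_deriv_two
  set r := m / (3 * (1 + M))
  set G : ℝ → ℝ := fun s => exp (r * s) * plateEnergy M m (x s) (deriv x s) with hG
  have hG' : ∀ s, HasDerivAt G (exp (r * s) * (r * plateEnergy M m (x s) (deriv x s)
      + (2 * (1 + M) * deriv x s * deriv (deriv x) s + 2 * M * (1 + M) * x s * deriv x s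
        + m * (deriv x s ^ 2 + x s * deriv (deriv x) s)))) s := by
    intro s
    have h1 := (hx1 s).hasDerivAt
    have h2 := (hx2 s).hasDerivAt
    have hE := ((h2.pow 2).const_mul (1 + M)).add ((h1.pow 2).const_mul (M * (1 + M)))
      |>.add ((h1.mul h2).const_mul m)
    have he : HasDerivAt (fun s => exp (r * s)) (exp (r * s) * r) s := by
      simpa using ((hasDerivAt_id s).const_mul r).exp
    refine (he.mul hE).congr_deriv ?_
    simp only [Pi.add_apply, Pi.mul_apply, Pi.pow_apply, Nat.cast_ofNat, plateEnergy]
    ring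
  have hanti : AntitoneOn G (Set.Ici 0) := by
    refine antitoneOn_of_deriv_nonpos (convex_Ici 0)
      (fun s _ => (hG' s).continuousAt.continuousWithinAt)
      (fun s _ => (hG' s).differentiableAt.differentiableWithinAt) fun s hs => ?_
    rw [interior_Ici] at hs
    have hode := hx.2 s hs
    simp only [smul_eq_mul] at hode
    rw [(hG' s).deriv]
    exact mul_nonpos_of_nonneg_of_nonpos (exp_pos _).le
      (plateEnergy_dissipation hM hm0 hm1 hmM hode)
  have hGt : G t ≤ G 0 := hanti Set.self_mem_Ici ht ht
  simp only [hG, mul_zero, exp_zero, one_mul] at hGt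
  have hlow := sq_le_plateEnergy hM hm0 hm1 hmM (x t) (deriv x t)
  have hup := plateEnergy_le hM hm0 hm1 hmM (x 0) (deriv x 0)
  have hMM : 0 < M * (1 + M) := by positivity
  have hEt : plateEnergy M m (x t) (deriv x t)
      ≤ exp (-(r * t)) * plateEnergy M m (x 0) (deriv x 0) := by
    rw [exp_neg, ← div_eq_inv_mul, le_div_iff₀' (exp_pos _)]
    exact hGt
  have key : M * (1 + M) * x t ^ 2
      ≤ M * (1 + M) * (3 * exp (-(r * t)) * (deriv x 0 ^ 2 / M + x 0 ^ 2)) := by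
    have : M * (1 + M) * (3 * exp (-(r * t)) * (deriv x 0 ^ 2 / M + x 0 ^ 2))
        = exp (-(r * t)) * (3 * ((1 + M) * deriv x 0 ^ 2 + M * (1 + M) * x 0 ^ 2)) := by
      field_simp
    rw [this]
    nlinarith [mul_le_mul_of_nonneg_left hup (exp_pos (-(r * t))).le]
  exact le_of_mul_le_mul_left key hMM

variable {f : ℝ → ℂ}

lemma norm_sq_le_of_le_one_tenth (hf : IsPlateMode M f) (hM0 : 0 ≤ M) (hM : M ≤ 1 / 10)
    {t : ℝ} (ht : 0 ≤ t) :
    ‖f t‖ ^ 2 ≤ 21 * (‖f 0‖ ^ 2 + ‖deriv f 0‖ ^ 2) * exp (-(2 * M) * t) := by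
  have hd : Differentiable ℝ f := hf.1.differentiable (by norm_num)
  have hre := (hf.clm_comp Complex.reCLM).sq_le_of_le_one_tenth hM0 hM ht
  have him := (hf.clm_comp Complex.imCLM).sq_le_of_le_one_tenth hM0 hM ht
  rw [Complex.reCLM.deriv_comp_eq hd] at hre
  rw [Complex.imCLM.deriv_comp_eq hd] at him
  simp only [Function.comp_apply, Complex.reCLM_apply, Complex.imCLM_apply] at hre him
  simp only [Complex.sq_norm, Complex.normSq_apply]
  linear_combination hre + him

lemma norm_sq_le_exp_mul {m : ℝ} (hf : IsPlateMode M f) (hM : 0 < M) (hm0 : 0 ≤ m)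
    (hm1 : m ≤ 1) (hmM : m ≤ M) {t : ℝ} (ht : 0 ≤ t) :
    ‖f t‖ ^ 2 ≤ 3 * exp (-(m / (3 * (1 + M)) * t)) * (‖deriv f 0‖ ^ 2 / M + ‖f 0‖ ^ 2) := by
  have hd : Differentiable ℝ f := hf.1.differentiable (by norm_num)
  have hre := (hf.clm_comp Complex.reCLM).sq_le_exp_mul hM hm0 hm1 hmM ht
  have him := (hf.clm_comp Complex.imCLM).sq_le_exp_mul hM hm0 hm1 hmM ht
  rw [Complex.reCLM.deriv_comp_eq hd] at hre
  rw [Complex.imCLM.deriv_comp_eq hd] at him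
  simp only [Function.comp_apply, Complex.reCLM_apply, Complex.imCLM_apply] at hre him
  simp only [Complex.sq_norm, Complex.normSq_apply]
  linear_combination hre + him

lemma norm_sq_le_rpow {l : ℝ} (hf : IsPlateMode M f)
    (hM : 1 / 10 < M) (hl : 0 < l + 1) {t : ℝ} (ht : 0 < t) :
    ‖f t‖ ^ 2 ≤ 33 * (30 * (l + 1)) ^ (l + 1) * t ^ (-(l + 1))
      * ((1 + M) ^ (l + 1) * ‖f 0‖ ^ 2 + (1 + M) ^ l * ‖deriv f 0‖ ^ 2) := by
  have h1M : 0 < 1 + M := by linarith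
  have henergy := hf.norm_sq_le_exp_mul (by linarith) (by norm_num) (by norm_num) hM.le ht.le
  have hexp : exp (-(1 / 10 / (3 * (1 + M)) * t))
      ≤ (30 * (l + 1)) ^ (l + 1) * t ^ (-(l + 1)) * (1 + M) ^ (l + 1) := by
    have hrate : 1 / 10 / (3 * (1 + M)) * t = t / (30 * (1 + M)) := by field_simp; ring
    have hpow : (l + 1) ^ (l + 1) * (t / (30 * (1 + M))) ^ (-(l + 1))
        = (30 * (l + 1)) ^ (l + 1) * t ^ (-(l + 1)) * (1 + M) ^ (l + 1) := by
      rw [div_rpow ht.le (by positivity), rpow_neg (x := 30 * (1 + M)) (by positivity),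
        div_inv_eq_mul, mul_rpow (by norm_num) h1M.le, mul_rpow (by norm_num) hl.le]
      ring
    rw [hrate, ← hpow]
    exact exp_neg_le_rpow_mul_rpow_neg hl (by positivity)
  have hweight : (1 + M) ^ (l + 1) * (‖deriv f 0‖ ^ 2 / M)
      ≤ 11 * ((1 + M) ^ l * ‖deriv f 0‖ ^ 2) := by
    have h11 : (1 + M) / M ≤ 11 := by rw [div_le_iff₀ (by linarith)]; linarith
    calc (1 + M) ^ (l + 1) * (‖deriv f 0‖ ^ 2 / M)
        = (1 + M) ^ l * ((1 + M) / M * ‖deriv f 0‖ ^ 2) := by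
          rw [rpow_add h1M, rpow_one]; ring
      _ ≤ (1 + M) ^ l * (11 * ‖deriv f 0‖ ^ 2) := by gcongr
      _ = 11 * ((1 + M) ^ l * ‖deriv f 0‖ ^ 2) := by ring
  have hK : 0 ≤ (30 * (l + 1)) ^ (l + 1) * t ^ (-(l + 1)) := by positivity
  have hA : 0 ≤ (1 + M) ^ (l + 1) * ‖f 0‖ ^ 2 := by positivity
  calc ‖f t‖ ^ 2
      ≤ 3 * ((30 * (l + 1)) ^ (l + 1) * t ^ (-(l + 1)) * (1 + M) ^ (l + 1))
          * (‖deriv f 0‖ ^ 2 / M + ‖f 0‖ ^ 2) := by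
        refine henergy.trans ?_
        gcongr
    _ = 3 * ((30 * (l + 1)) ^ (l + 1) * t ^ (-(l + 1)))
          * ((1 + M) ^ (l + 1) * (‖deriv f 0‖ ^ 2 / M) + (1 + M) ^ (l + 1) * ‖f 0‖ ^ 2) := by
        ring
    _ ≤ 33 * (30 * (l + 1)) ^ (l + 1) * t ^ (-(l + 1))
          * ((1 + M) ^ (l + 1) * ‖f 0‖ ^ 2 + (1 + M) ^ l * ‖deriv f 0‖ ^ 2) := by
        nlinarith [mul_le_mul_of_nonneg_left hweight hK, mul_nonneg hK hA]

end IsPlateMode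

end PlateMode

section Fourier

variable {n : ℕ}

lemma mlog_nonneg (ξ : EuclideanSpace ℝ (Fin n)) : 0 ≤ mlog ξ :=
  log_nonneg (le_add_of_nonneg_right (sq_nonneg _))

lemma norm_sq_le_two_mul_mlog {ξ : EuclideanSpace ℝ (Fin n)} (h : mlog ξ ≤ 1 / 10) :
    ‖ξ‖ ^ 2 ≤ 2 * mlog ξ := by
  have hlog := le_log_one_add_of_nonneg (sq_nonneg ‖ξ‖)
  rw [← mlog, div_le_iff₀ (by positivity)] at hlog
  nlinarith [sq_nonneg ‖ξ‖]

lemma Ysq_nonneg (f : EuclideanSpace ℝ (Fin n) → ℂ) (δ : ℝ) : 0 ≤ Ysq f δ :=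
  integral_nonneg fun ξ => mul_nonneg (rpow_nonneg (by linarith [mlog_nonneg ξ]) _) (sq_nonneg _)

lemma I0_nonneg (u₀ u₁ : EuclideanSpace ℝ (Fin n) → ℂ) (l : ℝ) : 0 ≤ I0 u₀ u₁ l :=
  sqrt_nonneg _

lemma norm_ft_le_norm11 {f : EuclideanSpace ℝ (Fin n) → ℂ} (hf : MemL11 f)
    (ξ : EuclideanSpace ℝ (Fin n)) : ‖ft f ξ‖ ≤ norm11 f := by
  calc ‖ft f ξ‖ ≤ ∫ x, ‖Complex.exp (-Complex.I * ((inner ℝ x ξ : ℝ) : ℂ)) * f x‖ :=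
        norm_integral_le_integral_norm _
    _ = ∫ x, ‖f x‖ := by
        congr with x
        simp [Complex.norm_exp]
    _ ≤ norm11 f :=
        integral_mono hf.1.norm hf.2 fun x => le_mul_of_one_le_left (norm_nonneg _)
          (le_add_of_nonneg_right (norm_nonneg _))

lemma integral_exp_neg_mul_sq_norm_euclidean {b : ℝ} (hb : 0 < b) :
    ∫ ξ : EuclideanSpace ℝ (Fin n), exp (-b * ‖ξ‖ ^ 2) = (π / b) ^ ((n : ℝ) / 2) := by
  rw [GaussianFourier.integral_rexp_neg_mul_sq_norm hb, finrank_euclideanSpace_fin]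

variable {u₀ u₁ : EuclideanSpace ℝ (Fin n) → ℂ} {v : ℝ → EuclideanSpace ℝ (Fin n) → ℂ}

lemma IsFourierSol.isPlateMode (hv : IsFourierSol u₀ u₁ v) (ξ : EuclideanSpace ℝ (Fin n)) :
    IsPlateMode (mlog ξ) (fun t => v t ξ) := by
  obtain ⟨hcd, hode, -, -⟩ := hv.2 ξ
  refine ⟨hcd, fun t ht => ?_⟩
  simpa only [Complex.real_smul] using hode t ht

lemma IsFourierSol.norm_sq_le (hv : IsFourierSol u₀ u₁ v) (h0 : MemL11 u₀) (h1 : MemL11 u₁)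
    {l t : ℝ} (hl : 0 < l + 1) (ht : 0 < t) (ξ : EuclideanSpace ℝ (Fin n)) :
    ‖v t ξ‖ ^ 2 ≤ 21 * (norm11 u₀ ^ 2 + norm11 u₁ ^ 2) * exp (-t * ‖ξ‖ ^ 2)
      + 33 * (30 * (l + 1)) ^ (l + 1) * t ^ (-(l + 1))
        * ((1 + mlog ξ) ^ (l + 1) * ‖ft u₀ ξ‖ ^ 2 + (1 + mlog ξ) ^ l * ‖ft u₁ ξ‖ ^ 2) := by
  obtain ⟨-, -, hv0, hv1⟩ := hv.2 ξ
  have hmode := hv.isPlateMode ξ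
  have hM := mlog_nonneg ξ
  have hhigh : 0 ≤ 33 * (30 * (l + 1)) ^ (l + 1) * t ^ (-(l + 1))
      * ((1 + mlog ξ) ^ (l + 1) * ‖ft u₀ ξ‖ ^ 2 + (1 + mlog ξ) ^ l * ‖ft u₁ ξ‖ ^ 2) := by
    have := rpow_nonneg (x := 1 + mlog ξ) (by linarith) (l + 1)
    have := rpow_nonneg (x := 1 + mlog ξ) (by linarith) l
    positivity
  rcases le_or_gt (mlog ξ) (1 / 10) with hlow | hhi
  · have hmodes := hmode.norm_sq_le_of_le_one_tenth hM hlow ht.le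
    simp only [hv0, hv1] at hmodes
    have := norm_ft_le_norm11 h0 ξ
    have := norm_ft_le_norm11 h1 ξ
    have hexp : exp (-(2 * mlog ξ) * t) ≤ exp (-t * ‖ξ‖ ^ 2) :=
      exp_le_exp.2 (by nlinarith [norm_sq_le_two_mul_mlog hlow])
    refine le_add_of_le_of_nonneg (hmodes.trans ?_) hhigh
    gcongr
  · have hmodes := hmode.norm_sq_le_rpow hhi hl ht
    simp only [hv0, hv1] at hmodes
    exact le_add_of_nonneg_of_le (by positivity) hmodes

lemma IsFourierSol.integral_norm_sq_le (hv : IsFourierSol u₀ u₁ v) (h0 : MemL11 u₀)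
    (h1 : MemL11 u₁) {l t : ℝ} (h0Y : MemY u₀ (l + 1)) (h1Y : MemY u₁ l) (hl : 0 < l + 1)
    (ht : 0 < t) :
    ∫ ξ, ‖v t ξ‖ ^ 2 ≤ 21 * (norm11 u₀ ^ 2 + norm11 u₁ ^ 2) * (π / t) ^ ((n : ℝ) / 2)
      + 33 * (30 * (l + 1)) ^ (l + 1) * t ^ (-(l + 1)) * (Ysq u₀ (l + 1) + Ysq u₁ l) := by
  have hgauss := integral_exp_neg_mul_sq_norm_euclidean (n := n) ht
  have hlow := (Integrable.of_integral_ne_zero (by rw [hgauss]; positivity)).const_mul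
    (21 * (norm11 u₀ ^ 2 + norm11 u₁ ^ 2))
  have hY : Integrable fun ξ => (1 + mlog ξ) ^ (l + 1) * ‖ft u₀ ξ‖ ^ 2
      + (1 + mlog ξ) ^ l * ‖ft u₁ ξ‖ ^ 2 := h0Y.add h1Y
  have hhigh := hY.const_mul (33 * (30 * (l + 1)) ^ (l + 1) * t ^ (-(l + 1)))
  calc ∫ ξ, ‖v t ξ‖ ^ 2
      ≤ ∫ ξ, (21 * (norm11 u₀ ^ 2 + norm11 u₁ ^ 2) * exp (-t * ‖ξ‖ ^ 2)
        + 33 * (30 * (l + 1)) ^ (l + 1) * t ^ (-(l + 1))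
          * ((1 + mlog ξ) ^ (l + 1) * ‖ft u₀ ξ‖ ^ 2 + (1 + mlog ξ) ^ l * ‖ft u₁ ξ‖ ^ 2)) :=
        integral_mono_of_nonneg (ae_of_all _ fun ξ => by positivity) (hlow.add hhigh)
          (ae_of_all _ (hv.norm_sq_le h0 h1 hl ht))
    _ = _ := by
        rw [integral_add hlow hhigh, integral_const_mul, integral_const_mul,
          integral_add h0Y h1Y, hgauss, Ysq, Ysq]

lemma IsFourierSol.integral_norm_sq_le_rpow (hv : IsFourierSol u₀ u₁ v) (h0 : MemL11 u₀)
    (h1 : MemL11 u₁) {l t : ℝ} (h0Y : MemY u₀ (l + 1)) (h1Y : MemY u₁ l) (hl : 0 < l + 1)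
    (hln : l + 1 ≤ (n : ℝ) / 2) (ht : 1 ≤ t) :
    ∫ ξ, ‖v t ξ‖ ^ 2 ≤ (21 * π ^ ((n : ℝ) / 2) + 33 * (30 * (l + 1)) ^ (l + 1))
      * I0 u₀ u₁ l ^ 2 * t ^ (-(l + 1)) := by
  have ht0 : 0 < t := by linarith
  have hY0 := Ysq_nonneg u₀ (l + 1)
  have hY1 := Ysq_nonneg u₁ l
  have hI : I0 u₀ u₁ l ^ 2 = norm11 u₀ ^ 2 + norm11 u₁ ^ 2 + Ysq u₀ (l + 1) + Ysq u₁ l :=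
    sq_sqrt (by positivity)
  have hgauss : (π / t) ^ ((n : ℝ) / 2) ≤ π ^ ((n : ℝ) / 2) * t ^ (-(l + 1)) := by
    rw [div_rpow pi_pos.le ht0.le, div_eq_mul_inv, rpow_neg ht0.le]
    gcongr
  calc ∫ ξ, ‖v t ξ‖ ^ 2
      ≤ 21 * (norm11 u₀ ^ 2 + norm11 u₁ ^ 2) * (π / t) ^ ((n : ℝ) / 2)
        + 33 * (30 * (l + 1)) ^ (l + 1) * t ^ (-(l + 1)) * (Ysq u₀ (l + 1) + Ysq u₁ l) :=
        hv.integral_norm_sq_le h0 h1 h0Y h1Y hl ht0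
    _ ≤ 21 * I0 u₀ u₁ l ^ 2 * (π ^ ((n : ℝ) / 2) * t ^ (-(l + 1)))
        + 33 * (30 * (l + 1)) ^ (l + 1) * t ^ (-(l + 1)) * I0 u₀ u₁ l ^ 2 := by
        have hN : norm11 u₀ ^ 2 + norm11 u₁ ^ 2 ≤ I0 u₀ u₁ l ^ 2 := by rw [hI]; linarith
        have hY : Ysq u₀ (l + 1) + Ysq u₁ l ≤ I0 u₀ u₁ l ^ 2 := by
          rw [hI]; linarith [sq_nonneg (norm11 u₀), sq_nonneg (norm11 u₁)]
        gcongr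
    _ = _ := by ring

end Fourier

theorem optimal_L2_decay_general (n : ℕ) (l : ℝ) (hl1 : 1 ≤ l)
    (hl2 : l ≤ (n:ℝ) / 2 - 1)
    (u₀ u₁ : EuclideanSpace ℝ (Fin n) → ℂ)
    (h0 : MemL11 u₀) (h1 : MemL11 u₁)
    (h0Y : MemY u₀ (l + 1)) (h1Y : MemY u₁ l)
    (v : ℝ → EuclideanSpace ℝ (Fin n) → ℂ) (hv : IsFourierSol u₀ u₁ v) :
    ∃ C T : ℝ, 0 < C ∧ 1 ≤ T ∧ ∀ t ≥ T,
      Real.sqrt (∫ ξ, ‖v t ξ‖ ^ 2) ≤ C * I0 u₀ u₁ l * t ^ (-(l + 1) / 2) := by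
  set C := 21 * π ^ ((n : ℝ) / 2) + 33 * (30 * (l + 1)) ^ (l + 1)
  have hC : 0 < C := by positivity
  refine ⟨√C, 1, sqrt_pos.2 hC, le_rfl, fun t ht => ?_⟩
  have ht0 : 0 < t := by linarith
  calc √(∫ ξ, ‖v t ξ‖ ^ 2)
      ≤ √(C * I0 u₀ u₁ l ^ 2 * t ^ (-(l + 1))) :=
        sqrt_le_sqrt (hv.integral_norm_sq_le_rpow h0 h1 h0Y h1Y (by linarith) (by linarith) ht)
    _ = √C * I0 u₀ u₁ l * t ^ (-(l + 1) / 2) := by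
        rw [sqrt_mul (by positivity), sqrt_mul hC.le, sqrt_sq (I0_nonneg u₀ u₁ l),
          sqrt_eq_rpow (t ^ _), ← rpow_mul ht0.le]
        ring_nf

theorem optimal_L2_decay (n : ℕ) (hn : 4 ≤ n) (l : ℝ) (hl1 : 1 ≤ l)
    (hl2 : l ≤ (n:ℝ) / 2 - 1)
    (u₀ u₁ : EuclideanSpace ℝ (Fin n) → ℂ)
    (h0 : MemL11 u₀) (h1 : MemL11 u₁)
    (h0Y : MemY u₀ (l + 1)) (h1Y : MemY u₁ l)
    (v : ℝ → EuclideanSpace ℝ (Fin n) → ℂ) (hv : IsFourierSol u₀ u₁ v) :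
    ∃ C T : ℝ, 0 < C ∧ 1 ≤ T ∧ ∀ t ≥ T,
      Real.sqrt (∫ ξ, ‖v t ξ‖ ^ 2) ≤ C * I0 u₀ u₁ l * t ^ (-(l + 1) / 2) :=
  optimal_L2_decay_general n l hl1 hl2 u₀ u₁ h0 h1 h0Y h1Y v hv
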